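/- arXiv:1512.06439 — 5 statements merged into one kernel-verified Lean document; each statement's English description precedes it below -/
import Mathlib

section
/- The unweighted diamond graphs are not uniformly doubling: for every constant D ≥ 1 there exists n ∈ ℕ such that the metric space (V(D_n), d_{D_n}) is not doubling with constant D. In fact, the closed ball of radius 1 centered at the bottom vertex of D_n has diameter 2 and cannot be covered by fewer than (2^n + 1)/2 sets of diameter at most 1. -/
/-!
Every edge of `D_{n+1}` joins a vertex of `D_n` to a new vertex, so `D_{n+1}` is bipartite and a
set of diameter at most `1` has at most two points. The bottom vertex of `D_{n+1}` has `2^{n+1}`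
neighbours, so its closed unit ball, which has diameter `2`, has `2^{n+1} + 1` points and needs at
least `(2^{n+1} + 1)/2` sets of diameter at most `1` to be covered. Hence `D_{n+1}` is not
doubling with any constant `D` with `2 D < 2^{n+1} + 1`.
-/

/-- A graph given by a set of oriented edges. -/
structure EGraph where
  V : Type
  E : Type
  src : E → V
  tgt : E → V

/-- The diamond graphs `D_n`: `D_0` is a single edge, and `D_{n+1}` is obtained from
`D_n` by replacing each edge `uv` by a quadrilateral `u, a, v, b` (two new vertices
per edge, encoded as `(e, false)` and `(e, true)`). -/
def diamond : ℕ → EGraph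
  | 0 => { V := Bool, E := Unit, src := fun _ => false, tgt := fun _ => true }
  | n + 1 =>
    let G := diamond n
    { V := G.V ⊕ (G.E × Bool)
      E := G.E × Fin 4
      src := fun p =>
        if p.2.val = 0 then Sum.inl (G.src p.1)
        else if p.2.val = 1 then Sum.inr (p.1, false)
        else if p.2.val = 2 then Sum.inl (G.src p.1)
        else Sum.inr (p.1, true)
      tgt := fun p =>
        if p.2.val = 0 then Sum.inr (p.1, false)
        else if p.2.val = 1 then Sum.inl (G.tgt p.1)
        else if p.2.val = 2 then Sum.inr (p.1, true)
        else Sum.inl (G.tgt p.1) }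

/-- The Laakso graphs `L_n`: `L_0` is a single edge, and `L_{n+1}` is obtained from `L_n`
by replacing each edge `uv` by a copy of the pattern graph `L_1`.  In the pattern with
endpoints `u, v` and internal vertices `a = 0, b = 1, c = 2, d = 3` (encoded as
`(e, 0), …, (e, 3)`), the six edges are `u-a, a-b, a-c, b-d, c-d, d-v`. -/
def laakso : ℕ → EGraph
  | 0 => { V := Bool, E := Unit, src := fun _ => false, tgt := fun _ => true }
  | n + 1 =>
    let G := laakso n
    { V := G.V ⊕ (G.E × Fin 4)
      E := G.E × Fin 6
      src := fun p =>
        if p.2.val = 0 then Sum.inl (G.src p.1)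
        else if p.2.val = 1 then Sum.inr (p.1, 0)
        else if p.2.val = 2 then Sum.inr (p.1, 0)
        else if p.2.val = 3 then Sum.inr (p.1, 1)
        else if p.2.val = 4 then Sum.inr (p.1, 2)
        else Sum.inr (p.1, 3)
      tgt := fun p =>
        if p.2.val = 0 then Sum.inr (p.1, 0)
        else if p.2.val = 1 then Sum.inr (p.1, 1)
        else if p.2.val = 2 then Sum.inr (p.1, 2)
        else if p.2.val = 3 then Sum.inr (p.1, 3)
        else if p.2.val = 4 then Sum.inr (p.1, 3)
        else Sum.inl (G.tgt p.1) }

/-- The simple graph underlying an `EGraph`. -/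
def EGraph.toSimpleGraph (G : EGraph) : SimpleGraph G.V where
  Adj u v := u ≠ v ∧ ∃ e, (G.src e = u ∧ G.tgt e = v) ∨ (G.src e = v ∧ G.tgt e = u)
  symm := ⟨fun _ _ h => ⟨Ne.symm h.1, h.2.elim fun e he => ⟨e, he.symm⟩⟩⟩
  loopless := ⟨fun _ h => h.1 rfl⟩

/-- The unweighted diamond graph `D_n`; its shortest path metric is
`(DiamondGraph n).dist`. -/
abbrev DiamondGraph (n : ℕ) : SimpleGraph (diamond n).V := (diamond n).toSimpleGraph

/-- The unweighted Laakso graph `L_n`; its shortest path metric is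
`(LaaksoGraph n).dist`. -/
abbrev LaaksoGraph (n : ℕ) : SimpleGraph (laakso n).V := (laakso n).toSimpleGraph

/-- The bottom vertex of `D_n` (the vertex that evolved from the bottom vertex of `D_0`). -/
def diamondBottom : (n : ℕ) → (diamond n).V
  | 0 => false
  | n + 1 => Sum.inl (diamondBottom n)

/-- A graph (with its shortest path metric) is doubling with constant `D` if every set `B`
can be covered by at most `D` sets whose diameter is at most half the diameter of `B`;
here the diameter condition is expressed via arbitrary upper bounds `dB` on the diameter
of `B`. -/
def GraphDoublingWith {V : Type} (G : SimpleGraph V) (D : ℕ) : Prop :=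
  ∀ (B : Set V) (dB : ℕ), (∀ u ∈ B, ∀ v ∈ B, G.dist u v ≤ dB) →
    ∃ 𝒞 : Finset (Set V), 𝒞.card ≤ D ∧ (∀ s ∈ 𝒞, ∀ u ∈ s, ∀ v ∈ s, 2 * G.dist u v ≤ dB) ∧
      B ⊆ ⋃ s ∈ 𝒞, s

namespace SimpleGraph

variable {V : Type*} {G : SimpleGraph V}

lemma Connected.isClique_of_dist_le_one (hG : G.Connected) {s : Set V}
    (hs : ∀ u ∈ s, ∀ v ∈ s, G.dist u v ≤ 1) : G.IsClique s :=
  fun u hu v hv huv => dist_eq_one_iff_adj.mp <| le_antisymm (hs u hu v hv) (hG.pos_dist_of_ne huv)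

lemma Connected.card_le_mul_card_of_subset_iUnion (hG : G.Connected) {k : ℕ}
    (hk : G.Colorable k) {T : Finset V} {𝒞 : Finset (Set V)}
    (h𝒞 : ∀ s ∈ 𝒞, ∀ u ∈ s, ∀ v ∈ s, G.dist u v ≤ 1) (hT : ↑T ⊆ ⋃ s ∈ 𝒞, s) :
    T.card ≤ k * 𝒞.card := by
  classical
  have hpiece : ∀ s ∈ 𝒞, (T.filter (· ∈ s)).card ≤ k := fun s hs =>
    have hclique := (hG.isClique_of_dist_le_one (h𝒞 s hs)).subset
      fun _ hv => (Finset.mem_filter.mp hv).2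
    hclique.card_le_of_colorable hk
  have hcover : T ⊆ 𝒞.biUnion (fun s => T.filter (· ∈ s)) := fun v hv => by
    obtain ⟨s, hs, hvs⟩ := Set.mem_iUnion₂.mp (hT hv)
    exact Finset.mem_biUnion.mpr ⟨s, hs, Finset.mem_filter.mpr ⟨hv, hvs⟩⟩
  calc T.card ≤ (𝒞.biUnion (fun s => T.filter (· ∈ s))).card := Finset.card_le_card hcover
    _ ≤ ∑ s ∈ 𝒞, (T.filter (· ∈ s)).card := Finset.card_biUnion_le
    _ ≤ ∑ _s ∈ 𝒞, k := Finset.sum_le_sum hpiece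
    _ = k * 𝒞.card := by rw [Finset.sum_const, smul_eq_mul, mul_comm]

lemma Connected.dist_le_two_mul_of_dist_le (hG : G.Connected) {x u v : V} {r : ℕ}
    (hu : G.dist x u ≤ r) (hv : G.dist x v ≤ r) : G.dist u v ≤ 2 * r := by
  have htri := hG.dist_triangle (u := u) (v := x) (w := v)
  have hux : G.dist u x = G.dist x u := dist_comm
  omega

lemma dist_eq_two_of_mem_commonNeighbors {u v x : V} (hne : u ≠ v) (hnadj : ¬ G.Adj u v)
    (hx : x ∈ G.commonNeighbors u v) : G.dist u v = 2 := by
  rw [mem_commonNeighbors] at hx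
  let p : G.Walk u v := .cons hx.1 (.cons hx.2.symm .nil)
  exact le_antisymm (dist_le p) (p.reachable.one_lt_dist_of_ne_of_not_adj hne hnadj)

end SimpleGraph

open SimpleGraph

lemma diamond_adj_src {n : ℕ} (e : (diamond n).E) (b : Bool) :
    (DiamondGraph (n + 1)).Adj (.inl ((diamond n).src e)) (.inr (e, b)) :=
  ⟨Sum.inl_ne_inr, (e, if b then 2 else 0), .inl ⟨by cases b <;> rfl, by cases b <;> rfl⟩⟩

lemma diamond_adj_tgt {n : ℕ} (e : (diamond n).E) (b : Bool) :
    (DiamondGraph (n + 1)).Adj (.inr (e, b)) (.inl ((diamond n).tgt e)) :=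
  ⟨Sum.inr_ne_inl, (e, if b then 3 else 1), .inl ⟨by cases b <;> rfl, by cases b <;> rfl⟩⟩

def diamondColoring (n : ℕ) : (DiamondGraph (n + 1)).Coloring Bool :=
  Coloring.mk Sum.isLeft fun {u v} ⟨_, ⟨_, i⟩, h⟩ => by
    fin_cases i <;> rcases h with ⟨rfl, rfl⟩ | ⟨rfl, rfl⟩ <;> simp [diamond]

lemma reachable_inl_of_reachable {n : ℕ} {u v : (diamond n).V}
    (h : (DiamondGraph n).Reachable u v) :
    (DiamondGraph (n + 1)).Reachable (.inl u) (.inl v) := by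
  rw [reachable_iff_reflTransGen] at h
  refine (reachable_iff_reflTransGen _ _).mpr <|
    h.lift' (Sum.inl : (diamond n).V → (diamond (n + 1)).V)
      fun u v ⟨_, e, he⟩ => (reachable_iff_reflTransGen _ _).mp ?_
  have hpath := (diamond_adj_src e false).reachable.trans (diamond_adj_tgt e false).reachable
  rcases he with ⟨rfl, rfl⟩ | ⟨rfl, rfl⟩
  exacts [hpath, hpath.symm]

lemma reachable_diamondBottom : ∀ (n : ℕ) (v : (diamond n).V),
    (DiamondGraph n).Reachable (diamondBottom n) v
  | 0, false => .rfl
  | 0, true => Adj.reachable ⟨Bool.false_ne_true, (), .inl ⟨rfl, rfl⟩⟩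
  | n + 1, .inl u => reachable_inl_of_reachable (reachable_diamondBottom n u)
  | n + 1, .inr (e, b) => (reachable_inl_of_reachable (reachable_diamondBottom n _)).trans
      (diamond_adj_src e b).reachable

lemma diamond_connected (n : ℕ) : (DiamondGraph n).Connected :=
  have : Nonempty (diamond n).V := ⟨diamondBottom n⟩
  ⟨fun u v => (reachable_diamondBottom n u).symm.trans (reachable_diamondBottom n v)⟩

/-- The edges of `D_n` at the bottom vertex are indexed by words `w`: in the `k`-th subdivision
step take the side `w k` of the quadrilateral (`false` for `a`, `true` for `b`). -/
def bottomEdge : (n : ℕ) → (Fin n → Bool) → (diamond n).E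
  | 0, _ => ()
  | n + 1, w => (bottomEdge n (Fin.init w), if w (Fin.last n) then 2 else 0)

lemma src_bottomEdge : ∀ (n : ℕ) (w : Fin n → Bool),
    (diamond n).src (bottomEdge n w) = diamondBottom n
  | 0, _ => rfl
  | n + 1, w => by
    cases h : w (Fin.last n) <;> simp [bottomEdge, diamond, diamondBottom, h, src_bottomEdge]

lemma bottomEdge_injective : ∀ n : ℕ, Function.Injective (bottomEdge n)
  | 0 => fun _ _ _ => Subsingleton.elim _ _
  | n + 1 => fun w w' h => by
    simp only [bottomEdge] at h
    obtain ⟨hinit, hlast⟩ := Prod.ext_iff.mp h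
    replace hinit := bottomEdge_injective n hinit
    replace hlast : w (Fin.last n) = w' (Fin.last n) := by
      split_ifs at hlast <;> simp_all
    rw [← Fin.snoc_init_self w, ← Fin.snoc_init_self w', hinit, hlast]

lemma diamondBottom_adj (n : ℕ) (w : Fin n → Bool) (b : Bool) :
    (DiamondGraph (n + 1)).Adj (diamondBottom (n + 1)) (.inr (bottomEdge n w, b)) := by
  have h := diamond_adj_src (bottomEdge n w) b
  rwa [src_bottomEdge] at h

lemma two_pow_add_one_le_two_mul_card_of_cover (n : ℕ) (𝒞 : Finset (Set (diamond (n + 1)).V))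
    (h𝒞 : ∀ s ∈ 𝒞, ∀ u ∈ s, ∀ v ∈ s, (DiamondGraph (n + 1)).dist u v ≤ 1)
    (hcov : {v | (DiamondGraph (n + 1)).dist (diamondBottom (n + 1)) v ≤ 1} ⊆ ⋃ s ∈ 𝒞, s) :
    2 ^ (n + 1) + 1 ≤ 2 * 𝒞.card := by
  classical
  let nbr : (Fin n → Bool) × Bool ↪ (diamond (n + 1)).V :=
    ⟨fun p => .inr (bottomEdge n p.1, p.2), fun _ _ h =>
      have h := Prod.ext_iff.mp (Sum.inr_injective h)
      Prod.ext (bottomEdge_injective n h.1) h.2⟩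
  let T := (Finset.univ.map nbr).cons (diamondBottom (n + 1)) fun h => by
    obtain ⟨_, -, h⟩ := Finset.mem_map.mp h
    exact Sum.inr_ne_inl h
  have hT : ↑T ⊆ {v | (DiamondGraph (n + 1)).dist (diamondBottom (n + 1)) v ≤ 1} := by
    intro v hv
    simp only [T, nbr, Finset.coe_cons, Finset.coe_map, Set.mem_insert_iff, Set.mem_image,
      Finset.coe_univ, Set.mem_univ, true_and] at hv
    rcases hv with rfl | ⟨⟨w, b⟩, rfl⟩
    · simp
    · exact (dist_eq_one_iff_adj.mpr (diamondBottom_adj n w b)).le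
  have := (diamond_connected (n + 1)).card_le_mul_card_of_subset_iUnion
    (diamondColoring n).colorable h𝒞 (hT.trans hcov)
  rwa [Finset.card_cons, Finset.card_map, Finset.card_univ, Fintype.card_prod, Fintype.card_fun,
    Fintype.card_fin, Fintype.card_bool, ← pow_succ] at this

lemma not_graphDoublingWith_diamond {n D : ℕ} (hD : 2 * D < 2 ^ (n + 1) + 1) :
    ¬ GraphDoublingWith (DiamondGraph (n + 1)) D := fun h => by
  obtain ⟨𝒞, hcard, h𝒞, hcov⟩ :=
    h {v | (DiamondGraph (n + 1)).dist (diamondBottom (n + 1)) v ≤ 1} 2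
      fun u hu v hv => (diamond_connected (n + 1)).dist_le_two_mul_of_dist_le hu hv
  have := two_pow_add_one_le_two_mul_card_of_cover n 𝒞
    (fun s hs u hu v hv => by have := h𝒞 s hs u hu v hv; omega) hcov
  omega

/-- The unweighted diamond graphs are not uniformly doubling: for every
`D ≥ 1` there is `n` such that `D_n` is not doubling with constant `D`.  In fact, for
`n ≥ 1`, the closed ball of radius `1` centered at the bottom vertex of `D_n` has diameter
`2` and cannot be covered by fewer than `(2^n + 1)/2` sets of diameter at most `1`. -/
theorem diamonds_not_uniformly_doubling :
    (∀ D : ℕ, 1 ≤ D → ∃ n : ℕ, ¬ GraphDoublingWith (DiamondGraph n) D) ∧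
    (∀ n : ℕ, 1 ≤ n →
      (∀ u ∈ {v : (diamond n).V | (DiamondGraph n).dist (diamondBottom n) v ≤ 1},
        ∀ v ∈ {v : (diamond n).V | (DiamondGraph n).dist (diamondBottom n) v ≤ 1},
          (DiamondGraph n).dist u v ≤ 2) ∧
      (∃ u ∈ {v : (diamond n).V | (DiamondGraph n).dist (diamondBottom n) v ≤ 1},
        ∃ v ∈ {v : (diamond n).V | (DiamondGraph n).dist (diamondBottom n) v ≤ 1},
          (DiamondGraph n).dist u v = 2) ∧
      (∀ 𝒞 : Finset (Set (diamond n).V),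
        (∀ s ∈ 𝒞, ∀ u ∈ s, ∀ v ∈ s, (DiamondGraph n).dist u v ≤ 1) →
        {v : (diamond n).V | (DiamondGraph n).dist (diamondBottom n) v ≤ 1} ⊆ ⋃ s ∈ 𝒞, s →
        2 ^ n + 1 ≤ 2 * 𝒞.card)) := by
  refine ⟨fun D _ => ⟨D + 1, not_graphDoublingWith_diamond ?_⟩, fun n hn => ?_⟩
  · have := D.lt_two_pow_self
    rw [pow_succ]
    omega
  obtain ⟨n, rfl⟩ := Nat.exists_eq_add_of_le' hn
  let u : (diamond (n + 1)).V := .inr (bottomEdge n default, false)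
  let v : (diamond (n + 1)).V := .inr (bottomEdge n default, true)
  have hu := diamondBottom_adj n default false
  have hv := diamondBottom_adj n default true
  have hne : u ≠ v := fun h => Bool.false_ne_true (congrArg Prod.snd (Sum.inr_injective h))
  have hnadj : ¬ (DiamondGraph (n + 1)).Adj u v := fun h => (diamondColoring n).valid h rfl
  exact ⟨fun _ hx _ hy => (diamond_connected (n + 1)).dist_le_two_mul_of_dist_le hx hy,
    ⟨u, (dist_eq_one_iff_adj.mpr hu).le, v, (dist_eq_one_iff_adj.mpr hv).le,
      dist_eq_two_of_mem_commonNeighbors hne hnadj ⟨hu.symm, hv.symm⟩⟩,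
    two_pow_add_one_le_two_mul_card_of_cover n⟩
end

section
/- The unweighted Laakso graphs are uniformly doubling: there exists a constant D ≥ 1 such that for every n ∈ ℕ, every bounded subset B of the metric space (V(L_n), d_{L_n}) can be covered by at most D sets of diameter at most diam(B)/2. -/
/-!
Collapsing every copy of `L_1` in `L_{n+1}` onto the endpoints of its edge of `L_n` gives a map
`L_{n+1} → L_n` that moves every vertex by at most `2`, while `L_n` sits in `L_{n+1}` with
all distances multiplied by exactly `4` (the lower bound comes from a `1`-Lipschitz potential).
So `k` collapses shrink distances by `4^k` up to an additive error `2 * 4^k`, and their fibers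
have diameter less than `2 * 4^k`. Given `B` of diameter at most `dB`, choose `k` with
`4^(k+1) ≤ dB + 4` and `dB < 16 * 4^k`: the fibers cover `B` by sets of diameter at most `dB / 2`,
and the image of `B` has diameter at most `17`, hence at most `4^17` points since all degrees are
at most `3`. If `k` would exceed `n`, collapse down to `L_0`, which has two vertices.
-/

theorem Nat.exists_four_pow_scale (n d : ℕ) :
    ∃ k m, n = m + k ∧ 4 ^ (k + 1) ≤ d + 4 ∧ (d < 16 * 4 ^ k ∨ m = 0) := by
  set k₀ := Nat.log 4 (d / 4 + 1)
  have hle : 4 ^ k₀ ≤ d / 4 + 1 := Nat.pow_log_le_self 4 (Nat.succ_ne_zero _)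
  have hlt : d / 4 + 1 < 4 ^ (k₀ + 1) := Nat.lt_pow_succ_log_self (by norm_num) _
  rw [pow_succ] at hlt
  rcases le_total k₀ n with hk | hk
  · exact ⟨k₀, n - k₀, by omega, by rw [pow_succ]; omega, .inl (by omega)⟩
  · have := Nat.pow_le_pow_right (show 0 < 4 by norm_num) hk
    exact ⟨n, 0, by omega, by rw [pow_succ]; omega, .inr rfl⟩

theorem Set.exists_finset_cover_of_fibers {α β : Type*} (f : α → β) (B : Set α)
    (hB : (f '' B).Finite) :
    ∃ 𝒞 : Finset (Set α), 𝒞.card ≤ (f '' B).ncard ∧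
      (∀ s ∈ 𝒞, ∀ x ∈ s, ∀ y ∈ s, f x = f y) ∧ B ⊆ ⋃ s ∈ 𝒞, s := by
  classical
  refine ⟨hB.toFinset.image fun b ↦ f ⁻¹' {b}, ?_, ?_, fun x hx ↦ ?_⟩
  · exact Finset.card_image_le.trans (Set.ncard_eq_toFinset_card _ hB).ge
  · simp only [Finset.mem_image]
    rintro _ ⟨b, -, rfl⟩ x (rfl : f x = b) y (hy : f y = f x)
    exact hy.symm
  · exact mem_iUnion₂.2 ⟨_, Finset.mem_image_of_mem _ (hB.mem_toFinset.2 ⟨x, hx, rfl⟩), rfl⟩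

namespace SimpleGraph

open Finset

variable {V : Type*} {G : SimpleGraph V}

theorem Adj.dist_le_dist_add_one {v w : V} (h : G.Adj v w) (u : V) :
    G.dist u w ≤ G.dist u v + 1 :=
  (h.reachable.dist_triangle_right u).trans_eq (by rw [dist_eq_one_iff_adj.2 h])

theorem Connected.card_filter_dist_le [Fintype V] [DecidableRel G.Adj] (hG : G.Connected)
    {d : ℕ} (hdeg : ∀ v, G.degree v ≤ d) (x : V) (r : ℕ) :
    #{y | G.dist y x ≤ r} ≤ (d + 1) ^ r := by
  classical
  induction r with
  | zero => exact card_le_one.2 fun a ha b hb ↦ by simp_all [hG.dist_eq_zero_iff]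
  | succ r ih =>
    have hsub : ({y | G.dist y x ≤ r + 1} : Finset V) ⊆
        ({y | G.dist y x ≤ r} : Finset V).biUnion fun v ↦ insert v (G.neighborFinset v) := by
      intro y hy
      simp only [mem_filter, mem_univ, true_and] at hy
      simp only [mem_biUnion, mem_filter, mem_univ, true_and, mem_insert, mem_neighborFinset]
      obtain ⟨w, hw⟩ := hG.exists_walk_length_eq_dist y x
      cases w with
      | nil => exact ⟨x, by simp, .inl rfl⟩
      | cons h p =>
        rw [Walk.length_cons] at hw
        exact ⟨_, (dist_le p).trans (by omega), .inr h.symm⟩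
    calc _ ≤ _ := card_le_card hsub
      _ ≤ ∑ v ∈ ({y | G.dist y x ≤ r} : Finset V), (d + 1) :=
          card_biUnion_le.trans <| sum_le_sum fun v _ ↦
            (card_insert_le _ _).trans (Nat.succ_le_succ (hdeg v))
      _ ≤ (d + 1) ^ (r + 1) := by
          rw [sum_const, smul_eq_mul, pow_succ]; exact Nat.mul_le_mul_right _ ih

theorem Connected.ncard_le_of_forall_dist_le [Finite V] (hG : G.Connected) {d : ℕ}
    (hdeg : ∀ v, (G.neighborSet v).ncard ≤ d) {S : Set V} {r : ℕ}
    (hS : ∀ u ∈ S, ∀ v ∈ S, G.dist u v ≤ r) : S.ncard ≤ (d + 1) ^ r := by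
  classical
  have := Fintype.ofFinite V
  obtain rfl | ⟨x, hx⟩ := S.eq_empty_or_nonempty
  · simp
  calc S.ncard ≤ (({y | G.dist y x ≤ r} : Finset V) : Set V).ncard :=
        Set.ncard_le_ncard fun y hy ↦ by simpa using hS y hy x hx
    _ ≤ _ := by
      rw [Set.ncard_coe_finset]
      refine hG.card_filter_dist_le (fun v ↦ ?_) x r
      rw [← card_neighborSet_eq_degree, ← Nat.card_eq_fintype_card, Nat.card_coe_set_eq]
      exact hdeg v

end SimpleGraph

namespace EGraph

def incidence (G : EGraph) (v : G.V) : Set G.E := {e | G.src e = v ∨ G.tgt e = v}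

theorem ncard_neighborSet_le (G : EGraph) [Finite G.E] (v : G.V) :
    (G.toSimpleGraph.neighborSet v).ncard ≤ (G.incidence v).ncard := by
  classical
  have hsub : G.toSimpleGraph.neighborSet v ⊆
      (fun e ↦ if G.src e = v then G.tgt e else G.src e) '' G.incidence v := by
    rintro w ⟨hne, e, ⟨rfl, rfl⟩ | ⟨rfl, rfl⟩⟩
    · exact ⟨e, .inl rfl, if_pos rfl⟩
    · exact ⟨e, .inr rfl, if_neg hne.symm⟩
  exact (Set.ncard_le_ncard hsub).trans (Set.ncard_image_le (Set.toFinite _))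

end EGraph

namespace Laakso

open SimpleGraph

theorem finite : ∀ n, Finite (laakso n).V ∧ Finite (laakso n).E
  | 0 => ⟨inferInstanceAs (Finite Bool), inferInstanceAs (Finite Unit)⟩
  | n + 1 =>
    have := (finite n).1
    have := (finite n).2
    ⟨inferInstanceAs (Finite (_ ⊕ _)), inferInstanceAs (Finite (_ × _))⟩

instance (n : ℕ) : Finite (laakso n).V := (finite n).1

instance (n : ℕ) : Finite (laakso n).E := (finite n).2

theorem src_ne_tgt : ∀ n (e : (laakso n).E), (laakso n).src e ≠ (laakso n).tgt e
  | 0, _ => Bool.false_ne_true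
  | n + 1, (e, j) => by fin_cases j <;> simp [laakso]

theorem adj_src_tgt (n : ℕ) (e : (laakso n).E) :
    (LaaksoGraph n).Adj ((laakso n).src e) ((laakso n).tgt e) :=
  ⟨src_ne_tgt n e, e, .inl ⟨rfl, rfl⟩⟩

/-- The indices of the edges of `L_1` incident to `a, b, c, d`. -/
def patternEdgesAt : Fin 4 → Finset (Fin 6) := ![{0, 1, 2}, {1, 3}, {2, 4}, {3, 4, 5}]

theorem eq_of_incident_inl {n : ℕ} {w : (laakso n).V} {e : (laakso n).E} {j : Fin 6}
    (h : (laakso (n + 1)).src (e, j) = .inl w ∨ (laakso (n + 1)).tgt (e, j) = .inl w) :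
    (j = 0 ∧ (laakso n).src e = w) ∨ (j = 5 ∧ (laakso n).tgt e = w) := by
  fin_cases j <;> simp_all [laakso]

theorem eq_of_incident_inr {n : ℕ} {e₀ e : (laakso n).E} {i : Fin 4} {j : Fin 6}
    (h : (laakso (n + 1)).src (e, j) = .inr (e₀, i) ∨
      (laakso (n + 1)).tgt (e, j) = .inr (e₀, i)) :
    e = e₀ ∧ j ∈ patternEdgesAt i := by
  fin_cases i <;> fin_cases j <;> simp_all [laakso, patternEdgesAt]

theorem ncard_incidence_le : ∀ n (v : (laakso n).V), ((laakso n).incidence v).ncard ≤ 3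
  | 0, v => (Set.ncard_le_card _).trans (by simp [laakso])
  | n + 1, .inl w => by
    refine (Set.ncard_le_ncard_of_injOn Prod.fst (t := (laakso n).incidence w) ?_ ?_).trans
      (ncard_incidence_le n w)
    · rintro ⟨e, j⟩ h
      rcases eq_of_incident_inl h with ⟨-, h⟩ | ⟨-, h⟩
      exacts [.inl h, .inr h]
    · rintro ⟨e, j⟩ h ⟨e', j'⟩ h' (rfl : e = e')
      rcases eq_of_incident_inl h with ⟨rfl, hs⟩ | ⟨rfl, ht⟩ <;>
        rcases eq_of_incident_inl h' with ⟨rfl, hs'⟩ | ⟨rfl, ht'⟩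
      · rfl
      · exact absurd (hs.trans ht'.symm) (src_ne_tgt n e)
      · exact absurd (hs'.trans ht.symm) (src_ne_tgt n e)
      · rfl
  | n + 1, .inr (e₀, i) => by
    refine (Set.ncard_le_ncard_of_injOn Prod.snd (t := ↑(patternEdgesAt i)) ?_ ?_).trans ?_
    · rintro ⟨e, j⟩ h
      exact (eq_of_incident_inr h).2
    · rintro ⟨e, j⟩ h ⟨e', j'⟩ h' (rfl : j = j')
      rw [(eq_of_incident_inr h).1, (eq_of_incident_inr h').1]
    · rw [Set.ncard_coe_finset]
      fin_cases i <;> decide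

theorem ncard_neighborSet_le (n : ℕ) (v : (laakso n).V) :
    ((LaaksoGraph n).neighborSet v).ncard ≤ 3 :=
  ((laakso n).ncard_neighborSet_le v).trans (ncard_incidence_le n v)

def proj (n : ℕ) : (laakso (n + 1)).V → (laakso n).V
  | .inl v => v
  | .inr (e, i) => if i.val ≤ 1 then (laakso n).src e else (laakso n).tgt e

theorem exists_walk_proj (n : ℕ) (x : (laakso (n + 1)).V) :
    ∃ w : (LaaksoGraph (n + 1)).Walk x (.inl (proj n x)), w.length ≤ 2 := by
  rcases x with v | ⟨e, i⟩
  · exact ⟨.nil, Nat.zero_le 2⟩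
  have adj (j) := adj_src_tgt (n + 1) (e, j)
  fin_cases i
  · exact ⟨(adj 0).symm.toWalk, one_le_two⟩
  · exact ⟨.cons (adj 1).symm (adj 0).symm.toWalk, le_rfl⟩
  · exact ⟨.cons (adj 4) (adj 5).toWalk, le_rfl⟩
  · exact ⟨(adj 5).toWalk, one_le_two⟩

theorem exists_walk_inl_of_adj {n : ℕ} {u v : (laakso n).V} (h : (LaaksoGraph n).Adj u v) :
    ∃ W : (LaaksoGraph (n + 1)).Walk (.inl u) (.inl v), W.length = 4 := by
  obtain ⟨-, e, ⟨rfl, rfl⟩ | ⟨rfl, rfl⟩⟩ := h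
  all_goals
    have adj (j) := adj_src_tgt (n + 1) (e, j)
    let W : (LaaksoGraph (n + 1)).Walk (.inl ((laakso n).src e)) (.inl ((laakso n).tgt e)) :=
      .cons (adj 0) (.cons (adj 1) (.cons (adj 3) (adj 5).toWalk))
  exacts [⟨W, rfl⟩, ⟨W.reverse, W.length_reverse.trans rfl⟩]

theorem exists_walk_inl {n : ℕ} {u v : (laakso n).V} (w : (LaaksoGraph n).Walk u v) :
    ∃ W : (LaaksoGraph (n + 1)).Walk (.inl u) (.inl v), W.length = 4 * w.length := by
  induction w with
  | nil => exact ⟨.nil, rfl⟩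
  | cons h _ ih =>
    obtain ⟨W₁, h₁⟩ := exists_walk_inl_of_adj h
    obtain ⟨W₂, h₂⟩ := ih
    refine ⟨W₁.append W₂, (W₁.length_append W₂).trans ?_⟩
    rw [h₁, h₂, Walk.length_cons]
    ring

theorem connected : ∀ n, (LaaksoGraph n).Connected
  | 0 => by
    have h : (LaaksoGraph 0).Adj false true := adj_src_tgt 0 ()
    refine (connected_iff _).2 ⟨fun u v ↦ ?_, ⟨false⟩⟩
    cases u <;> cases v
    exacts [.rfl, h.reachable, h.symm.reachable, .rfl]
  | n + 1 => by
    have hc := connected n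
    have to_inl (x) : (LaaksoGraph (n + 1)).Reachable x (.inl (proj n x)) :=
      ⟨(exists_walk_proj n x).choose⟩
    refine (connected_iff _).2 ⟨fun x y ↦ ?_, ⟨.inl hc.nonempty.some⟩⟩
    obtain ⟨w⟩ := hc.preconnected (proj n x) (proj n y)
    exact ((to_inl x).trans ⟨(exists_walk_inl w).choose⟩).trans (to_inl y).symm

/-- `4 * dist u ·` on `L_n`, extended to the new vertices of `L_{n+1}`; the vectors list the
distances in `L_1` from `a, b, c, d` to `u` and to `v`. -/
noncomputable def potential (n : ℕ) (u : (laakso n).V) : (laakso (n + 1)).V → ℕ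
  | .inl w => 4 * (LaaksoGraph n).dist u w
  | .inr (e, i) =>
    min (4 * (LaaksoGraph n).dist u ((laakso n).src e) + ![1, 2, 2, 3] i)
      (4 * (LaaksoGraph n).dist u ((laakso n).tgt e) + ![3, 2, 2, 1] i)

theorem potential_le_of_adj {n : ℕ} (u : (laakso n).V) {x y : (laakso (n + 1)).V}
    (h : (LaaksoGraph (n + 1)).Adj x y) : potential n u x ≤ potential n u y + 1 := by
  obtain ⟨-, ⟨e, j⟩, hxy⟩ := h
  have := (adj_src_tgt n e).dist_le_dist_add_one u
  have := (adj_src_tgt n e).symm.dist_le_dist_add_one u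
  fin_cases j <;> simp only [laakso] at hxy <;>
    rcases hxy with ⟨rfl, rfl⟩ | ⟨rfl, rfl⟩ <;> simp [potential] <;> omega

theorem potential_le_of_walk {n : ℕ} (u : (laakso n).V) {x y : (laakso (n + 1)).V}
    (w : (LaaksoGraph (n + 1)).Walk x y) : potential n u y ≤ potential n u x + w.length := by
  induction w with
  | nil => simp
  | cons h _ ih =>
    have := potential_le_of_adj u h.symm
    rw [Walk.length_cons]
    omega

theorem dist_inl (n : ℕ) (u v : (laakso n).V) :
    (LaaksoGraph (n + 1)).dist (.inl u) (.inl v) = 4 * (LaaksoGraph n).dist u v := by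
  apply le_antisymm
  · obtain ⟨w, hw⟩ := (connected n).exists_walk_length_eq_dist u v
    obtain ⟨W, hW⟩ := exists_walk_inl w
    exact (dist_le W).trans (hW.trans (by rw [hw])).le
  · obtain ⟨W, hW⟩ := (connected (n + 1)).exists_walk_length_eq_dist (.inl u) (.inl v)
    have := potential_le_of_walk u W
    simp only [potential, dist_self] at this
    omega

theorem dist_proj_le (n : ℕ) (x : (laakso (n + 1)).V) :
    (LaaksoGraph (n + 1)).dist x (.inl (proj n x)) ≤ 2 :=
  let ⟨w, hw⟩ := exists_walk_proj n x
  (dist_le w).trans hw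

theorem four_mul_dist_proj_le (n : ℕ) (x y : (laakso (n + 1)).V) :
    4 * (LaaksoGraph n).dist (proj n x) (proj n y) ≤ (LaaksoGraph (n + 1)).dist x y + 4 := by
  have hc := connected (n + 1)
  have hx := SimpleGraph.dist_comm.trans_le (dist_proj_le n x)
  have hy := dist_proj_le n y
  rw [← dist_inl]
  linarith [hc.dist_triangle (u := .inl (proj n x)) (v := x) (w := .inl (proj n y)),
    hc.dist_triangle (u := x) (v := y) (w := .inl (proj n y))]

theorem dist_le_four_mul_dist_proj (n : ℕ) (x y : (laakso (n + 1)).V) :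
    (LaaksoGraph (n + 1)).dist x y ≤ 4 * (LaaksoGraph n).dist (proj n x) (proj n y) + 4 := by
  have hc := connected (n + 1)
  have hx := dist_proj_le n x
  have hy := SimpleGraph.dist_comm.trans_le (dist_proj_le n y)
  rw [← dist_inl]
  linarith [hc.dist_triangle (u := x) (v := .inl (proj n x)) (w := y),
    hc.dist_triangle (u := .inl (proj n x)) (v := .inl (proj n y)) (w := y)]

def projIter : ∀ k m, (laakso (m + k)).V → (laakso m).V
  | 0, _, x => x
  | k + 1, m, x => projIter k m (proj (m + k) x)

theorem four_pow_mul_dist_projIter_add_two_le :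
    ∀ k m (x y : (laakso (m + k)).V), 4 ^ k * (LaaksoGraph m).dist (projIter k m x)
      (projIter k m y) + 2 ≤ (LaaksoGraph (m + k)).dist x y + 2 * 4 ^ k
  | 0, m, x, y => by simp [projIter]
  | k + 1, m, x, y => by
    have ih := four_pow_mul_dist_projIter_add_two_le k m (proj (m + k) x) (proj (m + k) y)
    have := four_mul_dist_proj_le (m + k) x y
    show 4 ^ (k + 1) * (LaaksoGraph m).dist (projIter k m (proj (m + k) x))
      (projIter k m (proj (m + k) y)) + 2 ≤ (LaaksoGraph (m + k + 1)).dist x y + 2 * 4 ^ (k + 1)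
    rw [pow_succ]
    nlinarith

theorem dist_add_two_le_of_projIter_eq :
    ∀ k m {x y : (laakso (m + k)).V}, projIter k m x = projIter k m y →
      (LaaksoGraph (m + k)).dist x y + 2 ≤ 2 * 4 ^ k
  | 0, m, x, y, (h : x = y) => by simp [h]
  | k + 1, m, x, y, h => by
    have ih := dist_add_two_le_of_projIter_eq k m h
    have := dist_le_four_mul_dist_proj (m + k) x y
    show (LaaksoGraph (m + k + 1)).dist x y + 2 ≤ 2 * 4 ^ (k + 1)
    rw [pow_succ]
    omega

theorem ncard_le_of_forall_dist_le {n r : ℕ} {S : Set (laakso n).V}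
    (hS : ∀ u ∈ S, ∀ v ∈ S, (LaaksoGraph n).dist u v ≤ r) : S.ncard ≤ 4 ^ r :=
  (connected n).ncard_le_of_forall_dist_le (ncard_neighborSet_le n) hS

theorem ncard_image_projIter_le {k m dB : ℕ} {B : Set (laakso (m + k)).V}
    (hB : ∀ u ∈ B, ∀ v ∈ B, (LaaksoGraph (m + k)).dist u v ≤ dB) (hdB : dB < 16 * 4 ^ k) :
    (projIter k m '' B).ncard ≤ 4 ^ 17 := by
  refine ncard_le_of_forall_dist_le ?_
  rintro _ ⟨x, hx, rfl⟩ _ ⟨y, hy, rfl⟩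
  have := four_pow_mul_dist_projIter_add_two_le k m x y
  have := hB x hx y hy
  have : 4 ^ k * (LaaksoGraph m).dist (projIter k m x) (projIter k m y) < 4 ^ k * 18 := by omega
  exact Nat.lt_succ_iff.1 (Nat.lt_of_mul_lt_mul_left this)

end Laakso

/-- The unweighted Laakso graphs are uniformly doubling: there is a
constant `D ≥ 1` such that every `L_n` is doubling with constant `D`. -/
theorem laakso_uniformly_doubling :
    ∃ D : ℕ, 1 ≤ D ∧ ∀ n : ℕ, GraphDoublingWith (LaaksoGraph n) D := by
  refine ⟨4 ^ 17, Nat.one_le_pow _ _ (by norm_num), fun n B dB hB ↦ ?_⟩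
  obtain ⟨k, m, rfl, hk, hdB⟩ := Nat.exists_four_pow_scale n dB
  obtain ⟨𝒞, hcard, hfiber, hcover⟩ :=
    Set.exists_finset_cover_of_fibers (Laakso.projIter k m) B (Set.toFinite _)
  refine ⟨𝒞, hcard.trans ?_, fun s hs x hx y hy ↦ ?_, hcover⟩
  · rcases hdB with hdB | rfl
    · exact Laakso.ncard_image_projIter_le hB hdB
    · exact (Set.ncard_le_card _).trans (by simp [laakso])
  · have := Laakso.dist_add_two_le_of_projIter_eq k m (hfiber s hs x hx y hy)
    rw [pow_succ] at hk
    omega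
end

section
/- Every cycle C in the unweighted diamond graph D_n is a principal cycle of one of the subdiamonds of D_n, and every principal cycle of a subdiamond of height 2^t has length 2^{t+1}. -/
/-- The set of edges of `D_{k+j}` of the subdiamond that evolved from the edge `e`
of `D_k`. -/
def subdiaEdges : (k j : ℕ) → (diamond k).E → Set ((diamond (k + j)).E)
  | _, 0, e => {e}
  | k, j + 1, e => {p : (diamond (k + j)).E × Fin 4 | p.1 ∈ subdiaEdges k j e}

/-- The natural inclusion of the vertices of `D_k` into the vertices of `D_{k+j}`. -/
def inclV : (k j : ℕ) → (diamond k).V → (diamond (k + j)).V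
  | _, 0, v => v
  | k, j + 1, v => Sum.inl (inclV k j v)

/-- The top vertex of the subdiamond of `D_{k+j}` that evolved from the edge `e` of
`D_k`. -/
def subdiaTop (k j : ℕ) (e : (diamond k).E) : (diamond (k + j)).V :=
  inclV k j ((diamond k).tgt e)

/-- The bottom vertex of the subdiamond of `D_{k+j}` that evolved from the edge `e` of
`D_k`. -/
def subdiaBot (k j : ℕ) (e : (diamond k).E) : (diamond (k + j)).V :=
  inclV k j ((diamond k).src e)

/-- The leftmost vertex of the subdiamond of `D_{k+(j+1)}` that evolved from the edge `e`
of `D_k`: the first of the two vertices created in the first subdivision of `e`. -/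
def subdiaLeft : (k j : ℕ) → (diamond k).E → (diamond (k + (j + 1))).V
  | _, 0, e => Sum.inr (e, false)
  | k, j + 1, e => Sum.inl (subdiaLeft k j e)

/-- The rightmost vertex of the subdiamond of `D_{k+(j+1)}` that evolved from the edge `e`
of `D_k`: the second of the two vertices created in the first subdivision of `e`. -/
def subdiaRight : (k j : ℕ) → (diamond k).E → (diamond (k + (j + 1))).V
  | _, 0, e => Sum.inr (e, true)
  | k, j + 1, e => Sum.inl (subdiaRight k j e)

/-- A cycle in a graph: a connected subgraph in which every vertex has degree `2`. -/
def IsCycleSubgraph {V : Type} {G : SimpleGraph V} (H : G.Subgraph) : Prop :=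
  H.Connected ∧ ∀ v ∈ H.verts, (H.neighborSet v).ncard = 2

/-- `C` is a principal cycle of the subdiamond of `D_{k+(j+1)}` evolved from the edge `e`
of `D_k`: a cycle, all of whose edges lie in the subdiamond, passing through the top and
the bottom of the subdiamond and also through its leftmost and rightmost vertices (so it
consists of a top–bottom path through the leftmost vertex and a bottom–top path through
the rightmost vertex). -/
def IsPrincipalCycle (k j : ℕ) (e : (diamond k).E)
    (C : (DiamondGraph (k + (j + 1))).Subgraph) : Prop :=
  IsCycleSubgraph C ∧
  (∀ u v, C.Adj u v → ∃ e' ∈ subdiaEdges k (j + 1) e,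
    ((diamond (k + (j + 1))).src e' = u ∧ (diamond (k + (j + 1))).tgt e' = v) ∨
    ((diamond (k + (j + 1))).src e' = v ∧ (diamond (k + (j + 1))).tgt e' = u)) ∧
  subdiaTop k (j + 1) e ∈ C.verts ∧ subdiaBot k (j + 1) e ∈ C.verts ∧
  subdiaLeft k j e ∈ C.verts ∧ subdiaRight k j e ∈ C.verts

open SimpleGraph

namespace EGraph

variable (G : EGraph)

def Joins (e : G.E) (u v : G.V) : Prop :=
  (G.src e = u ∧ G.tgt e = v) ∨ (G.src e = v ∧ G.tgt e = u)

def Incident (e : G.E) (v : G.V) : Prop :=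
  v = G.src e ∨ v = G.tgt e

variable {G} {e e' : G.E} {u v w : G.V}

theorem toSimpleGraph_adj : G.toSimpleGraph.Adj u v ↔ u ≠ v ∧ ∃ e, G.Joins e u v := Iff.rfl

theorem Joins.symm (h : G.Joins e u v) : G.Joins e v u := Or.symm h

theorem Joins.incident_left (h : G.Joins e u v) : G.Incident e u := by
  rcases h with ⟨rfl, -⟩ | ⟨-, rfl⟩
  exacts [Or.inl rfl, Or.inr rfl]

theorem joins_src_tgt (e : G.E) : G.Joins e (G.src e) (G.tgt e) := Or.inl ⟨rfl, rfl⟩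

theorem Joins.eq_or_eq_of_incident (h : G.Joins e u v) (hw : G.Incident e w) : w = u ∨ w = v := by
  rcases h with ⟨rfl, rfl⟩ | ⟨rfl, rfl⟩ <;> rcases hw with rfl | rfl <;> simp

theorem Joins.ne (hG : ∀ e, G.src e ≠ G.tgt e) (h : G.Joins e u v) : u ≠ v := by
  rcases h with ⟨rfl, rfl⟩ | ⟨rfl, rfl⟩
  exacts [hG e, (hG e).symm]

theorem Joins.unique_right (hG : ∀ e, G.src e ≠ G.tgt e) (h : G.Joins e u v)
    (h' : G.Joins e u w) : v = w := by
  rcases h with ⟨rfl, rfl⟩ | ⟨rfl, rfl⟩ <;> rcases h' with ⟨h1, h2⟩ | ⟨h1, h2⟩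
  exacts [h2, absurd h2.symm (hG e), absurd h1 (hG e), h1]

theorem Incident.exists_joins (h : G.Incident e u) : ∃ v, G.Joins e u v := by
  rcases h with rfl | rfl
  exacts [⟨_, joins_src_tgt e⟩, ⟨_, (joins_src_tgt e).symm⟩]

theorem joins_of_incident_of_ne (hu : G.Incident e u) (hv : G.Incident e v) (huv : u ≠ v) :
    G.Joins e u v := by
  obtain ⟨w, hw⟩ := hu.exists_joins
  rcases hw.eq_or_eq_of_incident hv with rfl | rfl
  exacts [absurd rfl huv, hw]

end EGraph

-- Lets `simp` see `(diamond (n + 1)).V` as the sum type `(diamond n).V ⊕ ((diamond n).E × Bool)`.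
attribute [reducible] diamond

namespace diamond

variable {n : ℕ}

theorem src_ne_tgt : ∀ {n : ℕ} (e : (diamond n).E), (diamond n).src e ≠ (diamond n).tgt e
  | 0, _ => Bool.false_ne_true
  | _ + 1, (_, i) => by fin_cases i <;> simp

theorem exists_joins_succ_iff {f : (diamond n).E} {x y : (diamond (n + 1)).V} :
    (∃ i, (diamond (n + 1)).Joins (f, i) x y) ↔
      ∃ u b, (diamond n).Incident f u ∧
        (x = .inl u ∧ y = .inr (f, b) ∨ x = .inr (f, b) ∧ y = .inl u) := by
  constructor
  · rintro ⟨i, h⟩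
    fin_cases i <;> simp [EGraph.Joins] at h <;>
      rcases h with ⟨rfl, rfl⟩ | ⟨rfl, rfl⟩ <;> simp [EGraph.Incident]
  · rintro ⟨u, b, hu | hu, ⟨rfl, rfl⟩ | ⟨rfl, rfl⟩⟩ <;> subst hu <;> cases b
    exacts [⟨0, Or.inl ⟨rfl, rfl⟩⟩, ⟨2, Or.inl ⟨rfl, rfl⟩⟩, ⟨0, Or.inr ⟨rfl, rfl⟩⟩,
      ⟨2, Or.inr ⟨rfl, rfl⟩⟩, ⟨1, Or.inr ⟨rfl, rfl⟩⟩, ⟨3, Or.inr ⟨rfl, rfl⟩⟩,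
      ⟨1, Or.inl ⟨rfl, rfl⟩⟩, ⟨3, Or.inl ⟨rfl, rfl⟩⟩]

theorem eq_of_joins : ∀ {n : ℕ} {e e' : (diamond n).E} {u v : (diamond n).V},
    (diamond n).Joins e u v → (diamond n).Joins e' u v → e = e'
  | 0, _, _, _, _, _, _ => rfl
  | _ + 1, (_, i), (_, i'), _, _, h, h' => by
    fin_cases i <;> fin_cases i' <;> simp [EGraph.Joins] at h h' <;> grind [src_ne_tgt]

theorem adj_succ_iff {x y : (diamond (n + 1)).V} :
    (DiamondGraph (n + 1)).Adj x y ↔ ∃ f u b, (diamond n).Incident f u ∧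
      (x = .inl u ∧ y = .inr (f, b) ∨ x = .inr (f, b) ∧ y = .inl u) := by
  rw [EGraph.toSimpleGraph_adj]
  constructor
  · rintro ⟨-, ⟨f, i⟩, h⟩
    exact ⟨f, exists_joins_succ_iff.1 ⟨i, h⟩⟩
  · rintro ⟨f, h⟩
    obtain ⟨i, hi⟩ := exists_joins_succ_iff.2 h
    refine ⟨?_, _, hi⟩
    obtain ⟨u, b, -, ⟨rfl, rfl⟩ | ⟨rfl, rfl⟩⟩ := h <;> simp

theorem adj_inl_inr_iff {u : (diamond n).V} {f : (diamond n).E} {b : Bool} :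
    (DiamondGraph (n + 1)).Adj (.inl u) (.inr (f, b)) ↔ (diamond n).Incident f u := by
  rw [adj_succ_iff]; simp

theorem adj_inl_iff {u : (diamond n).V} {y : (diamond (n + 1)).V} :
    (DiamondGraph (n + 1)).Adj (.inl u) y ↔
      ∃ f b, (diamond n).Incident f u ∧ y = .inr (f, b) := by
  rw [adj_succ_iff]; simp

theorem adj_inr_iff {f : (diamond n).E} {b : Bool} {y : (diamond (n + 1)).V} :
    (DiamondGraph (n + 1)).Adj (.inr (f, b)) y ↔ ∃ u, (diamond n).Incident f u ∧ y = .inl u := by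
  rw [adj_succ_iff]; simp

theorem not_adj_inl_inl {u v : (diamond n).V} :
    ¬ (DiamondGraph (n + 1)).Adj (.inl u) (.inl v) := by
  rw [adj_succ_iff]; simp

theorem not_adj_inr_inr {p q : (diamond n).E × Bool} :
    ¬ (DiamondGraph (n + 1)).Adj (.inr p) (.inr q) := by
  rw [adj_succ_iff]; simp

end diamond

instance diamond.finiteE : ∀ n, Finite (diamond n).E
  | 0 => inferInstanceAs (Finite Unit)
  | n + 1 => have := diamond.finiteE n; inferInstanceAs (Finite (_ × Fin 4))

instance diamond.finiteV : ∀ n, Finite (diamond n).V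
  | 0 => inferInstanceAs (Finite Bool)
  | n + 1 => have := diamond.finiteV n; inferInstanceAs (Finite (_ ⊕ _))

section Cycle

variable {V : Type} {G : SimpleGraph V} {C : G.Subgraph} {v a b : V}

theorem SimpleGraph.Subgraph.Connected.verts_subset_of_adj_closed {H : G.Subgraph}
    (hH : H.Connected) {S : Set V} (hS : ∀ x ∈ S, ∀ y, H.Adj x y → y ∈ S) (hv : v ∈ S)
    (hvH : v ∈ H.verts) : H.verts ⊆ S := by
  suffices ∀ x : H.verts, Relation.ReflTransGen H.coe.Adj ⟨v, hvH⟩ x → (x : V) ∈ S from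
    fun w hw => this ⟨w, hw⟩ ((reachable_iff_reflTransGen _ _).1 (hH ⟨v, hvH⟩ ⟨w, hw⟩))
  intro x hx
  induction hx with
  | refl => exact hv
  | tail _ hxy ih => exact hS _ ih _ hxy

theorem IsCycleSubgraph.neighborSet_eq_of_subset (hC : IsCycleSubgraph C) (hv : v ∈ C.verts)
    (hab : a ≠ b) (h : C.neighborSet v ⊆ {a, b}) : C.neighborSet v = {a, b} :=
  Set.eq_of_subset_of_ncard_le h (by rw [Set.ncard_pair hab, hC.2 v hv]) (Set.toFinite _)

theorem IsCycleSubgraph.neighborSet_eq_of_superset (hC : IsCycleSubgraph C) (hv : v ∈ C.verts)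
    (hab : a ≠ b) (h : {a, b} ⊆ C.neighborSet v) : C.neighborSet v = {a, b} :=
  (Set.eq_of_subset_of_ncard_le h (by rw [Set.ncard_pair hab, hC.2 v hv])
    (Set.finite_of_ncard_ne_zero (by rw [hC.2 v hv]; norm_num))).symm

theorem IsCycleSubgraph.ncard_eq_of_isBipartiteWith [Finite V] (hC : IsCycleSubgraph C)
    {s t : Set V} (hs : s ⊆ C.verts) (ht : t ⊆ C.verts)
    (hst : C.spanningCoe.IsBipartiteWith s t) : s.ncard = t.ncard := by
  classical
  have hs' := Set.toFinite s
  have ht' := Set.toFinite t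
  have key := Finset.card_mul_eq_card_mul C.Adj (m := 2) (n := 2) (s := hs'.toFinset)
    (t := ht'.toFinset)
    (fun x hx => by
      rw [Set.Finite.mem_toFinset] at hx
      rw [← Set.ncard_coe_finset, Finset.coe_bipartiteAbove, ← hC.2 x (hs hx)]
      simp only [Set.Finite.mem_toFinset]
      exact congrArg Set.ncard (isBipartiteWith_neighborSet hst hx).symm)
    (fun y hy => by
      rw [Set.Finite.mem_toFinset] at hy
      rw [← Set.ncard_coe_finset, Finset.coe_bipartiteBelow, ← hC.2 y (ht hy)]
      simp only [Set.Finite.mem_toFinset, C.adj_comm _ y]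
      exact congrArg Set.ncard (isBipartiteWith_neighborSet hst.symm hy).symm)
  rw [Set.ncard_eq_toFinset_card s hs', Set.ncard_eq_toFinset_card t ht']
  omega

end Cycle

open diamond

section Subdivision

variable {n : ℕ} {C : (DiamondGraph (n + 1)).Subgraph}

theorem IsCycleSubgraph.adj_inr_inl (hC : IsCycleSubgraph C) {f : (diamond n).E} {b : Bool}
    (hfb : .inr (f, b) ∈ C.verts) {u : (diamond n).V} (hu : (diamond n).Incident f u) :
    C.Adj (.inr (f, b)) (.inl u) := by
  have hN : C.neighborSet (.inr (f, b)) =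
      {.inl ((diamond n).src f), .inl ((diamond n).tgt f)} := by
    refine hC.neighborSet_eq_of_subset hfb (by simp [src_ne_tgt]) fun y hy => ?_
    obtain ⟨w, hw | hw, rfl⟩ := adj_inr_iff.1 (C.adj_sub hy) <;> simp [hw]
  change _ ∈ C.neighborSet _
  rcases hu with rfl | rfl <;> simp [hN]

theorem IsCycleSubgraph.verts_eq_of_inr_mem (hC : IsCycleSubgraph C) {f : (diamond n).E}
    (h₀ : .inr (f, false) ∈ C.verts) (h₁ : .inr (f, true) ∈ C.verts) :
    C.verts =
      {.inl ((diamond n).src f), .inl ((diamond n).tgt f), .inr (f, false), .inr (f, true)} := by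
  have hQ : ∀ u, (diamond n).Incident f u →
      C.neighborSet (.inl u) = {.inr (f, false), .inr (f, true)} := fun u hu =>
    hC.neighborSet_eq_of_superset (C.edge_vert (hC.adj_inr_inl h₀ hu).symm) (by simp) <| by
      rintro _ (rfl | rfl)
      exacts [(hC.adj_inr_inl h₀ hu).symm, (hC.adj_inr_inl h₁ hu).symm]
  refine (hC.1.verts_subset_of_adj_closed ?_ (by simp) h₀).antisymm ?_
  · intro x hx y hxy
    have hy : y ∈ C.neighborSet x := hxy
    rcases hx with rfl | rfl | rfl | rfl
    · rw [hQ _ (Or.inl rfl)] at hy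
      rcases hy with rfl | rfl <;> simp
    · rw [hQ _ (Or.inr rfl)] at hy
      rcases hy with rfl | rfl <;> simp
    all_goals obtain ⟨u, hu | hu, rfl⟩ := adj_inr_iff.1 (C.adj_sub hxy) <;> simp [hu]
  · rintro _ (rfl | rfl | rfl | rfl)
    exacts [C.edge_vert (hC.adj_inr_inl h₀ (Or.inl rfl)).symm,
      C.edge_vert (hC.adj_inr_inl h₀ (Or.inr rfl)).symm, h₀, h₁]

def projSubgraph (C : (DiamondGraph (n + 1)).Subgraph) : (DiamondGraph n).Subgraph where
  verts := {v | .inl v ∈ C.verts}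
  Adj v w := v ≠ w ∧ ∃ x, C.Adj (.inl v) x ∧ C.Adj x (.inl w)
  adj_sub := by
    rintro v w ⟨hvw, x, hvx, hxw⟩
    obtain ⟨f, b, hv, rfl⟩ := adj_inl_iff.1 (C.adj_sub hvx)
    have hw := adj_inl_inr_iff.1 (C.adj_sub hxw).symm
    exact EGraph.toSimpleGraph_adj.2 ⟨hvw, f, EGraph.joins_of_incident_of_ne hv hw hvw⟩
  edge_vert := fun ⟨_, _, h, _⟩ => C.edge_vert h
  symm := ⟨fun _ _ ⟨hne, x, h₁, h₂⟩ => ⟨hne.symm, x, h₂.symm, h₁.symm⟩⟩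

theorem projSubgraph_adj {v w : (diamond n).V} :
    (projSubgraph C).Adj v w ↔ v ≠ w ∧ ∃ x, C.Adj (.inl v) x ∧ C.Adj x (.inl w) := Iff.rfl

theorem projSubgraph_adj_iff (hC : IsCycleSubgraph C) {v w : (diamond n).V} :
    (projSubgraph C).Adj v w ↔ ∃ f b, .inr (f, b) ∈ C.verts ∧ (diamond n).Joins f v w := by
  rw [projSubgraph_adj]
  constructor
  · rintro ⟨hvw, x, hvx, hxw⟩
    obtain ⟨f, b, hv, rfl⟩ := adj_inl_iff.1 (C.adj_sub hvx)
    have hw := adj_inl_inr_iff.1 (C.adj_sub hxw).symm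
    exact ⟨f, b, C.edge_vert hvx.symm, EGraph.joins_of_incident_of_ne hv hw hvw⟩
  · rintro ⟨f, b, hfb, hJ⟩
    exact ⟨hJ.ne src_ne_tgt, _, (hC.adj_inr_inl hfb hJ.incident_left).symm,
      hC.adj_inr_inl hfb hJ.symm.incident_left⟩

theorem projSubgraph_connected (hC : IsCycleSubgraph C) : (projSubgraph C).Connected := by
  obtain ⟨v₀, hv₀⟩ : ∃ v, .inl v ∈ C.verts := by
    obtain ⟨x | ⟨f, b⟩, hx⟩ := hC.1.nonempty
    exacts [⟨x, hx⟩, ⟨_, C.edge_vert (hC.adj_inr_inl hx (Or.inl rfl)).symm⟩]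
  let T := {v | ∃ hv : v ∈ (projSubgraph C).verts,
    (projSubgraph C).coe.Reachable ⟨v₀, hv₀⟩ ⟨v, hv⟩}
  have hT : ∀ u v, u ∈ T → (projSubgraph C).Adj u v → v ∈ T := fun u v ⟨hu, hr⟩ huv =>
    ⟨(projSubgraph C).edge_vert huv.symm, hr.trans (Adj.reachable (G := (projSubgraph C).coe)
      (u := ⟨u, hu⟩) (v := ⟨v, (projSubgraph C).edge_vert huv.symm⟩) huv)⟩
  have hS : C.verts ⊆ {x | ∀ v, x = .inl v ∨ C.Adj x (.inl v) → v ∈ T} := by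
    refine hC.1.verts_subset_of_adj_closed ?_ ?_ hv₀
    · intro x hx y hxy v hv
      rcases hv with rfl | hyv
      · exact hx v (Or.inr hxy)
      obtain ⟨f, b, -, rfl⟩ := adj_inl_iff.1 (C.adj_sub hyv.symm)
      obtain ⟨u, -, rfl⟩ := adj_inr_iff.1 (C.adj_sub hxy.symm)
      have hu := hx u (Or.inl rfl)
      by_cases huv : u = v
      · exact huv ▸ hu
      · exact hT u v hu (projSubgraph_adj.2 ⟨huv, _, hxy, hyv⟩)
    · rintro v (h | h)
      · obtain rfl := Sum.inl_injective h
        exact ⟨hv₀, .rfl⟩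
      · exact absurd (C.adj_sub h) not_adj_inl_inl
  refine Subgraph.connected_iff.2 ⟨Subgraph.preconnected_iff.2 ?_, v₀, hv₀⟩
  rintro ⟨v, hv⟩ ⟨w, hw⟩
  obtain ⟨_, hrv⟩ := hS hv v (Or.inl rfl)
  obtain ⟨_, hrw⟩ := hS hw w (Or.inl rfl)
  exact hrv.symm.trans hrw

theorem projSubgraph_isCycleSubgraph (hC : IsCycleSubgraph C)
    (hnq : ∀ f, .inr (f, false) ∈ C.verts → .inr (f, true) ∉ C.verts) :
    IsCycleSubgraph (projSubgraph C) := by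
  refine ⟨projSubgraph_connected hC, fun v hv => ?_⟩
  obtain ⟨x, x', hxx', hN⟩ := Set.ncard_eq_two.1 (hC.2 _ hv)
  have hx : C.Adj (.inl v) x := show x ∈ C.neighborSet _ by simp [hN]
  have hx' : C.Adj (.inl v) x' := show x' ∈ C.neighborSet _ by simp [hN]
  obtain ⟨f, b, hf, rfl⟩ := adj_inl_iff.1 (C.adj_sub hx)
  obtain ⟨f', b', hf', rfl⟩ := adj_inl_iff.1 (C.adj_sub hx')
  have hff' : f ≠ f' := by
    rintro rfl
    have := C.edge_vert hx.symm
    have := C.edge_vert hx'.symm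
    cases b <;> cases b' <;> simp_all
  obtain ⟨w, hw⟩ := hf.exists_joins
  obtain ⟨w', hw'⟩ := hf'.exists_joins
  refine Set.ncard_eq_two.2 ⟨w, w', fun h => hff' (eq_of_joins hw (h ▸ hw')), ?_⟩
  apply Set.Subset.antisymm
  · intro z hz
    obtain ⟨g, c, hg, hgz⟩ := (projSubgraph_adj_iff hC).1 hz
    have : .inr (g, c) ∈ C.neighborSet (.inl v) := (hC.adj_inr_inl hg hgz.incident_left).symm
    rw [hN] at this
    rcases this with h | h <;>
      simp only [Set.mem_singleton_iff, Sum.inr.injEq, Prod.mk.injEq] at h <;>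
      obtain ⟨rfl, rfl⟩ := h
    exacts [Or.inl (hgz.unique_right src_ne_tgt hw), Or.inr (hgz.unique_right src_ne_tgt hw')]
  · rintro z (rfl | rfl)
    exacts [(projSubgraph_adj_iff hC).2 ⟨f, b, C.edge_vert hx.symm, hw⟩,
      (projSubgraph_adj_iff hC).2 ⟨f', b', C.edge_vert hx'.symm, hw'⟩]

theorem IsCycleSubgraph.ncard_verts_eq_two_mul (hC : IsCycleSubgraph C) :
    C.verts.ncard = 2 * (projSubgraph C).verts.ncard := by
  let s : Set (diamond (n + 1)).V := Sum.inl '' (projSubgraph C).verts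
  have hs : s ⊆ C.verts := by rintro _ ⟨v, hv, rfl⟩; exact hv
  have hbip : C.spanningCoe.IsBipartiteWith s (C.verts \ s) := by
    refine ⟨Set.disjoint_sdiff_right, fun x y hxy => ?_⟩
    have hx := C.edge_vert hxy
    have hy := C.edge_vert hxy.symm
    rcases x with u | p <;> rcases y with w | q
    · exact absurd (C.adj_sub hxy) not_adj_inl_inl
    · exact Or.inl ⟨⟨u, hx, rfl⟩, hy, by simp [s]⟩
    · exact Or.inr ⟨⟨hx, by simp [s]⟩, ⟨w, hy, rfl⟩⟩
    · exact absurd (C.adj_sub hxy) not_adj_inr_inr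
  rw [← Set.ncard_sdiff_add_ncard_of_subset hs,
    ← hC.ncard_eq_of_isBipartiteWith hs Set.sdiff_subset hbip,
    Set.ncard_image_of_injective _ Sum.inl_injective, two_mul]

theorem exists_walk_inl_inl_length {u v : (diamond n).V} (p : (DiamondGraph n).Walk u v) :
    ∃ q : (DiamondGraph (n + 1)).Walk (.inl u) (.inl v), q.length = 2 * p.length := by
  induction p with
  | nil => exact ⟨.nil, rfl⟩
  | cons h _ ih =>
    obtain ⟨q, hq⟩ := ih
    obtain ⟨-, f, hJ⟩ := EGraph.toSimpleGraph_adj.1 h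
    refine ⟨.cons ((adj_inl_inr_iff (b := false)).2 hJ.incident_left)
      (.cons ((adj_inl_inr_iff (b := false)).2 hJ.symm.incident_left).symm q), ?_⟩
    simp only [Walk.length_cons, hq]
    ring

-- The second conjunct, about walks starting at a new vertex, is what the induction needs.
theorem exists_walk_of_walk_succ {x y : (diamond (n + 1)).V}
    (q : (DiamondGraph (n + 1)).Walk x y) {v : (diamond n).V} (hy : y = .inl v) :
    (∀ u, x = .inl u → ∃ p : (DiamondGraph n).Walk u v, 2 * p.length ≤ q.length) ∧
    (∀ f b, x = .inr (f, b) → ∃ u, (diamond n).Incident f u ∧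
      ∃ p : (DiamondGraph n).Walk u v, 2 * p.length + 1 ≤ q.length) := by
  induction q with
  | nil =>
    subst hy
    refine ⟨fun u hu => ?_, fun f b h => absurd h (by simp)⟩
    obtain rfl := Sum.inl_injective hu
    exact ⟨.nil, le_rfl⟩
  | cons h q ih =>
    obtain ⟨ih₁, ih₂⟩ := ih hy
    constructor
    · rintro u rfl
      obtain ⟨f, b, hu, rfl⟩ := adj_inl_iff.1 h
      obtain ⟨w, hw, p, hp⟩ := ih₂ f b rfl
      by_cases huw : u = w
      · subst huw
        exact ⟨p, by simp only [Walk.length_cons]; omega⟩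
      · refine ⟨.cons (EGraph.toSimpleGraph_adj.2
          ⟨huw, f, EGraph.joins_of_incident_of_ne hu hw huw⟩) p, ?_⟩
        simp only [Walk.length_cons]; omega
    · rintro f b rfl
      obtain ⟨u, hu, rfl⟩ := adj_inr_iff.1 h
      obtain ⟨p, hp⟩ := ih₁ u rfl
      exact ⟨u, hu, p, by simp only [Walk.length_cons]; omega⟩

theorem dist_inl_inl {u v : (diamond n).V} (h : (DiamondGraph n).Reachable u v) :
    (DiamondGraph (n + 1)).dist (.inl u) (.inl v) = 2 * (DiamondGraph n).dist u v := by
  obtain ⟨p, hp⟩ := h.exists_walk_length_eq_dist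
  obtain ⟨q, hq⟩ := exists_walk_inl_inl_length p
  obtain ⟨r, hr⟩ := Reachable.exists_walk_length_eq_dist ⟨q⟩
  obtain ⟨p', hp'⟩ := (exists_walk_of_walk_succ r rfl).1 u rfl
  apply le_antisymm
  · exact hp ▸ hq ▸ dist_le q
  · calc 2 * (DiamondGraph n).dist u v ≤ 2 * p'.length := by gcongr; exact dist_le p'
      _ ≤ r.length := hp'
      _ = _ := hr

theorem dist_subdiaTop_subdiaBot (k j : ℕ) (e : (diamond k).E) :
    (DiamondGraph (k + j)).dist (subdiaTop k j e) (subdiaBot k j e) = 2 ^ j := by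
  induction j with
  | zero =>
    exact dist_eq_one_iff_adj.2 (EGraph.toSimpleGraph_adj.2 ⟨(src_ne_tgt e).symm, e, Or.inr ⟨rfl, rfl⟩⟩)
  | succ j ih =>
    show (DiamondGraph (k + j + 1)).dist (.inl (subdiaTop k j e)) (.inl (subdiaBot k j e)) = _
    rw [dist_inl_inl (Reachable.of_dist_ne_zero (by rw [ih]; positivity)), ih, pow_succ, mul_comm]

theorem IsCycleSubgraph.forall_adj_joins_iff (hC : IsCycleSubgraph C) (F : Set (diamond n).E) :
    (∀ u v, C.Adj u v → ∃ e ∈ Prod.fst ⁻¹' F, (diamond (n + 1)).Joins e u v) ↔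
      ∀ f b, .inr (f, b) ∈ C.verts → f ∈ F := by
  constructor
  · intro hE f b hfb
    obtain ⟨⟨g, i⟩, hg, hJ⟩ := hE _ _ (hC.adj_inr_inl hfb (Or.inl rfl))
    obtain ⟨u, c, -, h | h⟩ := exists_joins_succ_iff.1 ⟨i, hJ⟩ <;> simp at h
    exact h.1.1 ▸ hg
  · intro hF u v huv
    obtain ⟨-, ⟨g, i⟩, hJ⟩ := C.adj_sub huv
    refine ⟨(g, i), ?_, hJ⟩
    obtain ⟨w, c, -, ⟨-, rfl⟩ | ⟨rfl, -⟩⟩ := exists_joins_succ_iff.1 ⟨i, hJ⟩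
    exacts [hF g c (C.edge_vert huv.symm), hF g c (C.edge_vert huv)]

theorem forall_projSubgraph_adj_joins_iff (hC : IsCycleSubgraph C) (F : Set (diamond n).E) :
    (∀ u v, (projSubgraph C).Adj u v → ∃ e ∈ F, (diamond n).Joins e u v) ↔
      ∀ f b, .inr (f, b) ∈ C.verts → f ∈ F := by
  constructor
  · intro hE f b hfb
    obtain ⟨e, he, hJ⟩ :=
      hE _ _ ((projSubgraph_adj_iff hC).2 ⟨f, b, hfb, EGraph.joins_src_tgt f⟩)
    exact eq_of_joins hJ (EGraph.joins_src_tgt f) ▸ he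
  · intro hF u v huv
    obtain ⟨f, b, hfb, hJ⟩ := (projSubgraph_adj_iff hC).1 huv
    exact ⟨f, hF f b hfb, hJ⟩

end Subdivision

theorem subdiaLeft_ne_inclV (k j : ℕ) (e : (diamond k).E) (v : (diamond k).V) :
    subdiaLeft k j e ≠ inclV k (j + 1) v := by
  induction j with
  | zero => exact Sum.inr_ne_inl
  | succ j ih => exact fun h => ih (Sum.inl_injective h)

section Principal

variable {k j : ℕ} {e : (diamond k).E}

theorem isPrincipalCycle_zero_iff {C : (DiamondGraph (k + (0 + 1))).Subgraph}
    (hC : IsCycleSubgraph C) :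
    IsPrincipalCycle k 0 e C ↔ .inr (e, false) ∈ C.verts ∧ .inr (e, true) ∈ C.verts := by
  refine ⟨fun h => ⟨h.2.2.2.2.1, h.2.2.2.2.2⟩, fun ⟨h₀, h₁⟩ => ?_⟩
  have hV := hC.verts_eq_of_inr_mem h₀ h₁
  refine ⟨hC, (hC.forall_adj_joins_iff _).2 fun f b hfb => ?_, ?_, ?_, h₀, h₁⟩
  · rw [hV] at hfb
    simp only [Set.mem_insert_iff, Set.mem_singleton_iff, Sum.inr.injEq, Prod.mk.injEq,
      reduceCtorEq, false_or] at hfb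
    rcases hfb with ⟨rfl, -⟩ | ⟨rfl, -⟩ <;> rfl
  · show .inl ((diamond k).tgt e) ∈ C.verts
    simp [hV]
  · show .inl ((diamond k).src e) ∈ C.verts
    simp [hV]

theorem isPrincipalCycle_succ_iff {C : (DiamondGraph (k + (j + 1 + 1))).Subgraph}
    (hC : IsCycleSubgraph C) (hnq : ∀ f, .inr (f, false) ∈ C.verts → .inr (f, true) ∉ C.verts) :
    IsPrincipalCycle k (j + 1) e C ↔ IsPrincipalCycle k j e (projSubgraph C) :=
  ⟨fun ⟨_, hE, hV⟩ => ⟨projSubgraph_isCycleSubgraph hC hnq,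
      (forall_projSubgraph_adj_joins_iff hC _).2 ((hC.forall_adj_joins_iff _).1 hE), hV⟩,
    fun ⟨_, hE, hV⟩ => ⟨hC,
      (hC.forall_adj_joins_iff _).2 ((forall_projSubgraph_adj_joins_iff hC _).1 hE), hV⟩⟩

end Principal

theorem IsPrincipalCycle.not_mem_of_inr_mem {k j : ℕ} {e : (diamond k).E}
    {C : (DiamondGraph (k + (j + 1 + 1))).Subgraph} (hP : IsPrincipalCycle k (j + 1) e C)
    (f : (diamond (k + (j + 1))).E) : .inr (f, false) ∈ C.verts → .inr (f, true) ∉ C.verts := by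
  intro h₀ h₁
  have hV := hP.1.verts_eq_of_inr_mem h₀ h₁
  obtain ⟨-, -, htop, hbot, hleft, -⟩ := hP
  have htb : subdiaTop k (j + 1) e ≠ subdiaBot k (j + 1) e := fun h => by
    have := dist_subdiaTop_subdiaBot k (j + 1) e
    rw [h, dist_self] at this
    exact (pow_pos two_pos _).ne this
  have hlt : subdiaLeft k j e ≠ subdiaTop k (j + 1) e := subdiaLeft_ne_inclV k j e _
  have hlb : subdiaLeft k j e ≠ subdiaBot k (j + 1) e := subdiaLeft_ne_inclV k j e _
  change .inl (subdiaTop k (j + 1) e) ∈ C.verts at htop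
  change .inl (subdiaBot k (j + 1) e) ∈ C.verts at hbot
  change .inl (subdiaLeft k j e) ∈ C.verts at hleft
  simp only [hV, Set.mem_insert_iff, Set.mem_singleton_iff, Sum.inl.injEq, reduceCtorEq,
    or_false] at htop hbot hleft
  rcases htop with h₁ | h₁ <;> rcases hbot with h₂ | h₂ <;> rcases hleft with h₃ | h₃ <;>
    simp_all

theorem IsPrincipalCycle.ncard_verts {k : ℕ} {e : (diamond k).E} :
    ∀ {j : ℕ} {C : (DiamondGraph (k + (j + 1))).Subgraph}, IsPrincipalCycle k j e C →
      C.verts.ncard = 2 ^ (j + 2)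
  | 0, C, hP => by
    obtain ⟨h₀, h₁⟩ := (isPrincipalCycle_zero_iff hP.1).1 hP
    rw [hP.1.verts_eq_of_inr_mem h₀ h₁, Set.ncard_insert_of_notMem, Set.ncard_insert_of_notMem,
      Set.ncard_pair] <;> simp [src_ne_tgt]
  | j + 1, C, hP => by
    rw [hP.1.ncard_verts_eq_two_mul,
      ((isPrincipalCycle_succ_iff hP.1 hP.not_mem_of_inr_mem).1 hP).ncard_verts]
    ring

theorem not_isCycleSubgraph_zero (C : (DiamondGraph 0).Subgraph) : ¬ IsCycleSubgraph C := by
  rintro ⟨hC, hdeg⟩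
  obtain ⟨x, hx⟩ := hC.nonempty
  have hN : C.neighborSet x ⊆ {!x} := fun y hy => by
    have := (C.adj_sub hy).ne
    revert this
    cases x <;> cases y <;> simp
  have := Set.ncard_le_ncard hN
  rw [hdeg x hx, Set.ncard_singleton] at this
  omega

theorem exists_isPrincipalCycle : ∀ {n : ℕ} (C : (DiamondGraph n).Subgraph), IsCycleSubgraph C →
    ∃ (k j : ℕ) (h : k + (j + 1) = n) (e : (diamond k).E),
      IsPrincipalCycle k j e (cast (congrArg (fun m => (DiamondGraph m).Subgraph) h.symm) C)
  | 0, C, hC => absurd hC (not_isCycleSubgraph_zero C)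
  | n + 1, C, hC => by
    by_cases hq : ∃ f, .inr (f, false) ∈ C.verts ∧ .inr (f, true) ∈ C.verts
    · obtain ⟨f, hf⟩ := hq
      exact ⟨n, 0, rfl, f, (isPrincipalCycle_zero_iff hC).2 hf⟩
    · push Not at hq
      obtain ⟨k, j, rfl, e, hP⟩ :=
        exists_isPrincipalCycle (projSubgraph C) (projSubgraph_isCycleSubgraph hC hq)
      exact ⟨k, j + 1, rfl, e, (isPrincipalCycle_succ_iff hC hq).2 hP⟩

/-- Every cycle `C` in `D_n` is a principal cycle of one of the
subdiamonds of `D_n`, and every principal cycle of a subdiamond of height `2^t` has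
length `2^{t+1}`. -/
theorem cycles_in_diamonds (n : ℕ) :
    (∀ C : (DiamondGraph n).Subgraph, IsCycleSubgraph C →
      ∃ (k j : ℕ) (h : k + (j + 1) = n) (e : (diamond k).E),
        IsPrincipalCycle k j e
          (cast (congrArg (fun m => (DiamondGraph m).Subgraph) h.symm) C)) ∧
    (∀ (k j : ℕ) (e : (diamond k).E) (C : (DiamondGraph (k + (j + 1))).Subgraph) (t : ℕ),
      IsPrincipalCycle k j e C →
      (DiamondGraph (k + (j + 1))).dist (subdiaTop k (j + 1) e) (subdiaBot k (j + 1) e)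
        = 2 ^ t →
      C.verts.ncard = 2 ^ (t + 1)) := by
  refine ⟨exists_isPrincipalCycle, fun k j e C t hP ht => ?_⟩
  obtain rfl : t = j + 1 :=
    Nat.pow_right_injective le_rfl (ht.symm.trans (dist_subdiaTop_subdiaBot k (j + 1) e))
  exact hP.ncard_verts
end

section
/- For the unweighted diamond graphs, the natural inclusion of vertex sets V(D_n) ⊆ V(D_{n+1}) multiplies all distances by exactly 2: for all u, v ∈ V(D_n), d_{D_{n+1}}(u,v) = 2·d_{D_n}(u,v). Equivalently, for the weighted diamonds (each edge of D_n given length 2^{-n}) the identity map D_{n} → D_{n+1} is an isometry on V(D_n). -/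
/-!
A walk in `D_{n+1}` alternates between old vertices and new ones, and the two old neighbours of a
new vertex on the edge `e` of `D_n` are equal or joined by `e`. Hence a walk between old vertices
projects to a walk in `D_n` of at most half its length, while each edge of `D_n` lifts to a path of
length `2`.
-/

/-- `diamond (n + 1)` is definitionally `(diamond n).diamondStep`. -/
def EGraph.diamondStep (G : EGraph) : EGraph where
  V := G.V ⊕ (G.E × Bool)
  E := G.E × Fin 4
  src p :=
    if p.2.val = 0 then Sum.inl (G.src p.1)
    else if p.2.val = 1 then Sum.inr (p.1, false)
    else if p.2.val = 2 then Sum.inl (G.src p.1)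
    else Sum.inr (p.1, true)
  tgt p :=
    if p.2.val = 0 then Sum.inr (p.1, false)
    else if p.2.val = 1 then Sum.inl (G.tgt p.1)
    else if p.2.val = 2 then Sum.inr (p.1, true)
    else Sum.inl (G.tgt p.1)

namespace EGraph

open SimpleGraph Sum

variable {G : EGraph}

theorem not_adj_inl_inl_diamondStep {u v : G.V} :
    ¬ G.diamondStep.toSimpleGraph.Adj (inl u) (inl v) := by
  rintro ⟨-, ⟨e, i⟩, h⟩
  fin_cases i <;> simp [diamondStep] at h

theorem not_adj_inr_inr_diamondStep {x y : G.E × Bool} :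
    ¬ G.diamondStep.toSimpleGraph.Adj (inr x) (inr y) := by
  rintro ⟨-, ⟨e, i⟩, h⟩
  fin_cases i <;> simp [diamondStep] at h

theorem diamondStep_adj_inl_inr_iff {u : G.V} {e : G.E} {b : Bool} :
    G.diamondStep.toSimpleGraph.Adj (inl u) (inr (e, b)) ↔ G.src e = u ∨ G.tgt e = u := by
  constructor
  · rintro ⟨-, ⟨f, i⟩, h⟩
    fin_cases i <;> simp [diamondStep] at h <;> aesop
  · rintro (rfl | rfl) <;> refine ⟨inl_ne_inr, ?_⟩ <;> cases b
    exacts [⟨(e, 0), .inl ⟨rfl, rfl⟩⟩, ⟨(e, 2), .inl ⟨rfl, rfl⟩⟩,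
      ⟨(e, 1), .inr ⟨rfl, rfl⟩⟩, ⟨(e, 3), .inr ⟨rfl, rfl⟩⟩]

theorem eq_or_adj_of_incident {e : G.E} {u w : G.V} (hu : G.src e = u ∨ G.tgt e = u)
    (hw : G.src e = w ∨ G.tgt e = w) : u = w ∨ G.toSimpleGraph.Adj u w := by
  by_cases huw : u = w
  · exact .inl huw
  refine .inr ⟨huw, e, ?_⟩
  rcases hu with rfl | rfl <;> rcases hw with rfl | rfl
  exacts [(huw rfl).elim, .inl ⟨rfl, rfl⟩, .inr ⟨rfl, rfl⟩, (huw rfl).elim]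

theorem exists_walk_diamondStep_length_eq {u v : G.V} (p : G.toSimpleGraph.Walk u v) :
    ∃ q : G.diamondStep.toSimpleGraph.Walk (inl u) (inl v), q.length = 2 * p.length := by
  induction p with
  | nil => exact ⟨.nil, rfl⟩
  | @cons u w v h p ih =>
    obtain ⟨q, hq⟩ := ih
    obtain ⟨-, e, he⟩ := h
    have hu : G.src e = u ∨ G.tgt e = u := by tauto
    have hw : G.src e = w ∨ G.tgt e = w := by tauto
    refine ⟨.cons (diamondStep_adj_inl_inr_iff (b := false) |>.2 hu)
      (.cons (diamondStep_adj_inl_inr_iff.2 hw).symm q), ?_⟩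
    show q.length + 1 + 1 = 2 * (p.length + 1)
    omega

theorem exists_walk_two_mul_length_le : ∀ {u v : G.V}
    (q : G.diamondStep.toSimpleGraph.Walk (inl u) (inl v)),
    ∃ p : G.toSimpleGraph.Walk u v, 2 * p.length ≤ q.length
  | _, _, .nil => ⟨.nil, le_rfl⟩
  | _, _, .cons (v := inl _) h _ => (not_adj_inl_inl_diamondStep h).elim
  | _, _, .cons (v := inr _) _ (.cons (v := inr _) h _) => (not_adj_inr_inr_diamondStep h).elim
  | _, _, .cons (v := inr _) h₁ (.cons (v := inl _) h₂ q) => by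
    obtain ⟨p, hp⟩ := exists_walk_two_mul_length_le q
    rcases eq_or_adj_of_incident (diamondStep_adj_inl_inr_iff.1 h₁)
      (diamondStep_adj_inl_inr_iff.1 h₂.symm) with rfl | h
    · exact ⟨p, hp.trans (Nat.le_add_right _ 2)⟩
    · exact ⟨.cons h p, Nat.add_le_add_right hp 2⟩
termination_by _ _ q => q.length
decreasing_by exact Nat.lt_add_of_pos_right two_pos

theorem dist_diamondStep_inl (u v : G.V) :
    G.diamondStep.toSimpleGraph.dist (inl u) (inl v) = 2 * G.toSimpleGraph.dist u v := by
  by_cases h : G.toSimpleGraph.Reachable u v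
  · obtain ⟨p, hp⟩ := h.exists_walk_length_eq_dist
    obtain ⟨q, hq⟩ := exists_walk_diamondStep_length_eq p
    refine le_antisymm (hp ▸ hq ▸ dist_le q) ?_
    obtain ⟨q', hq'⟩ := Reachable.exists_walk_length_eq_dist ⟨q⟩
    obtain ⟨p', hp'⟩ := exists_walk_two_mul_length_le q'
    calc 2 * G.toSimpleGraph.dist u v ≤ 2 * p'.length := Nat.mul_le_mul_left 2 (dist_le p')
      _ ≤ _ := hq' ▸ hp'
  · have h' : ¬ G.diamondStep.toSimpleGraph.Reachable (inl u) (inl v) := fun ⟨q⟩ ↦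
      h ⟨(exists_walk_two_mul_length_le q).choose⟩
    rw [dist_eq_zero_of_not_reachable h, dist_eq_zero_of_not_reachable h']

end EGraph

/-- The natural inclusion `V(D_n) ⊆ V(D_{n+1})` multiplies all
distances by exactly `2`; equivalently, for the weighted diamonds (each edge of `D_n` of
length `2^{-n}`) the identity map `D_n → D_{n+1}` is an isometry on `V(D_n)`. -/
theorem diamond_inclusion_doubles_distances (n : ℕ) (u v : (diamond n).V) :
    (DiamondGraph (n + 1)).dist (Sum.inl u) (Sum.inl v) = 2 * (DiamondGraph n).dist u v :=
  (diamond n).dist_diamondStep_inl u v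
end

section
/- Let k ≥ 1 be an integer and N ≥ 4^{10(k+1)} a real number. Let a_0, a_1, …, a_Q be points of the circle ℝ/Nℤ (with its arc-length metric d), where Q ≥ 4^k + ⌈4^{9k}/2⌉, such that for all indices 0 ≤ r < r' ≤ Q with r' − r ≤ N/16 one has (r' − r) ≤ d(a_r, a_{r'}) ≤ 4^k·(r' − r). For each i let t_i ∈ (−N/2, N/2] be the representative of a_i − a_0. Then all the numbers t_i for 4^k ≤ i ≤ 4^k + ⌈4^{9k}/2⌉ have the same sign; i.e., the points a_{4^k}, a_{4^k+1}, …, a_{4^k+⌈4^{9k}/2⌉} all lie on the same side of a_0. -/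
/-!
For `4^k ≤ i ≤ 4^k + 4^{9k}/2` the hypotheses give `i ≤ |t_i| ≤ 4^k i`, so `t_i` stays away from `0`, and the
circle distance between consecutive `t_i` is at most `4^k`. Representatives of opposite signs
differ by `|t_i| + |t_{i+1}|` in `ℝ`; since this sum is far below `N`, their circle distance is
then at least `min (|t_i| + |t_{i+1}|) (N - |t_i| - |t_{i+1}|) > 4^k`. So the sign of `t_i` never
changes along the range.
-/

namespace AddCircle

variable {p : ℝ}

theorem min_abs_le_norm_coe (hp : 0 < p) (x : ℝ) : min |x| (p - |x|) ≤ ‖(x : AddCircle p)‖ := by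
  rw [norm_eq]
  set m : ℤ := round (p⁻¹ * x)
  rcases eq_or_ne m 0 with hm | hm
  · simp [hm]
  · have hm1 : (1 : ℝ) ≤ |(m : ℝ)| := by exact_mod_cast Int.one_le_abs hm
    have hmp : p ≤ |(m : ℝ) * p| := by
      rw [abs_mul, abs_of_pos hp]; nlinarith
    calc min |x| (p - |x|) ≤ p - |x| := min_le_right _ _
      _ ≤ |(m : ℝ) * p| - |x| := by linarith
      _ ≤ |x - m * p| := by
        rw [abs_sub_comm]; exact abs_sub_abs_le_abs_sub _ _

variable [Fact (0 < p)]

theorem norm_eq_abs_equivIoc (x : AddCircle p) :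
    ‖x‖ = |(equivIoc p (-(p / 2)) x : ℝ)| := by
  obtain ⟨hlo, hhi⟩ := (equivIoc p (-(p / 2)) x).2
  have hp : 0 < p := Fact.out
  conv_lhs => rw [← coe_equivIoc (p := p) (a := -(p / 2)) (y := x)]
  rw [norm_coe_eq_abs_iff p hp.ne', abs_of_pos hp, abs_le]
  constructor <;> linarith

theorem pos_equivIoc_iff_of_norm_sub_lt {x y : AddCircle p}
    (h : ‖y - x‖ < min (‖x‖ + ‖y‖) (p - (‖x‖ + ‖y‖))) :
    0 < (equivIoc p (-(p / 2)) x : ℝ) ↔ 0 < (equivIoc p (-(p / 2)) y : ℝ) := by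
  set u := (equivIoc p (-(p / 2)) x : ℝ)
  set v := (equivIoc p (-(p / 2)) y : ℝ)
  have hyx : y - x = ((v - u : ℝ) : AddCircle p) := by
    rw [coe_sub, coe_equivIoc, coe_equivIoc]
  rw [hyx, norm_eq_abs_equivIoc x, norm_eq_abs_equivIoc y] at h
  by_contra hsign
  have huv : |v - u| = |u| + |v| := by
    rcases le_or_gt u 0 with hu | hu <;> rcases le_or_gt v 0 with hv | hv
    · exact absurd (iff_of_false hu.not_gt hv.not_gt) hsign
    · rw [abs_of_nonpos hu, abs_of_pos hv, abs_of_pos (by linarith)]; ring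
    · rw [abs_of_pos hu, abs_of_nonpos hv, abs_of_nonpos (by linarith)]; ring
    · exact absurd (iff_of_true hu hv) hsign
  exact h.not_ge (huv ▸ min_abs_le_norm_coe (Fact.out : 0 < p) (v - u))

theorem forall_pos_or_forall_neg_equivIoc (x : ℕ → AddCircle p) {L : ℝ} {m n : ℕ}
    (hm : 0 < m) (hLm : L ≤ 2 * m) (hLn : 2 * L * n < p)
    (hnorm : ∀ i, m ≤ i → i ≤ n → (i : ℝ) ≤ ‖x i‖ ∧ ‖x i‖ ≤ L * i)
    (hstep : ∀ i, m ≤ i → i < n → ‖x (i + 1) - x i‖ ≤ L) :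
    (∀ i, m ≤ i → i ≤ n → 0 < (equivIoc p (-(p / 2)) (x i) : ℝ)) ∨
      (∀ i, m ≤ i → i ≤ n → (equivIoc p (-(p / 2)) (x i) : ℝ) < 0) := by
  set r : AddCircle p → ℝ := fun y ↦ equivIoc p (-(p / 2)) y
  have step : ∀ i, m ≤ i → i < n → (0 < r (x i) ↔ 0 < r (x (i + 1))) := by
    intro i hmi hin
    obtain ⟨hlo, hhi⟩ := hnorm i hmi hin.le
    obtain ⟨hlo', hhi'⟩ := hnorm (i + 1) (by omega) hin
    have hL : 0 ≤ L := (norm_nonneg _).trans (hstep i hmi hin)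
    have hmi' : (m : ℝ) ≤ i := by exact_mod_cast hmi
    have hin' : (i : ℝ) + 1 ≤ n := by exact_mod_cast hin
    push_cast at hlo' hhi'
    apply pos_equivIoc_iff_of_norm_sub_lt
    refine lt_min ?_ ?_ <;> nlinarith [hstep i hmi hin, mul_le_mul_of_nonneg_left hin' hL]
  have propagate : ∀ i, m ≤ i → i ≤ n → (0 < r (x i) ↔ 0 < r (x m)) := by
    intro i hmi
    induction i, hmi using Nat.le_induction with
    | base => exact fun _ ↦ Iff.rfl
    | succ i hmi ih => exact fun hin ↦ (step i hmi hin).symm.trans (ih (by omega))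
  have ne_zero : ∀ i, m ≤ i → i ≤ n → r (x i) ≠ 0 := by
    intro i hmi hin hzero
    have : (i : ℝ) ≤ 0 := by simpa [norm_eq_abs_equivIoc (x i), r, hzero] using (hnorm i hmi hin).1
    have : (0 : ℝ) < i := by exact_mod_cast hm.trans_le hmi
    linarith
  rcases lt_or_ge n m with hnm | hmn
  · exact .inl fun i hmi hin ↦ absurd (hmi.trans hin) hnm.not_ge
  rcases lt_or_gt_of_ne (ne_zero m le_rfl hmn) with hneg | hpos
  · refine .inr fun i hmi hin ↦ lt_of_le_of_ne ?_ (ne_zero i hmi hin)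
    exact not_lt.mp fun h ↦ hneg.not_gt ((propagate i hmi hin).mp h)
  · exact .inl fun i hmi hin ↦ (propagate i hmi hin).mpr hpos

end AddCircle

theorem equally_spaced_points_on_same_side_general
    (k : ℕ) (N : ℝ) [Fact (0 < N)] (hN : (4 : ℝ) ^ (10 * (k + 1)) ≤ N)
    (Q : ℕ) (hQ : 4 ^ k + 4 ^ (9 * k) / 2 ≤ Q)
    (a : ℕ → AddCircle N)
    (ha : ∀ r r' : ℕ, r < r' → r' ≤ Q → ((r' - r : ℕ) : ℝ) ≤ N / 16 →
      ((r' - r : ℕ) : ℝ) ≤ dist (a r) (a r') ∧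
      dist (a r) (a r') ≤ 4 ^ k * ((r' - r : ℕ) : ℝ)) :
    (∀ i : ℕ, 4 ^ k ≤ i → i ≤ 4 ^ k + 4 ^ (9 * k) / 2 →
      0 < ((AddCircle.equivIoc N (-(N / 2)) (a i - a 0)) : ℝ)) ∨
    (∀ i : ℕ, 4 ^ k ≤ i → i ≤ 4 ^ k + 4 ^ (9 * k) / 2 →
      ((AddCircle.equivIoc N (-(N / 2)) (a i - a 0)) : ℝ) < 0) := by
  set M := 4 ^ k + 4 ^ (9 * k) / 2
  have hM : (M : ℝ) ≤ 2 * 4 ^ (9 * k) := by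
    have := Nat.pow_le_pow_right (by norm_num : 0 < 4) (by omega : k ≤ 9 * k)
    exact_mod_cast (by omega : M ≤ 2 * 4 ^ (9 * k))
  have hN' : (4 : ℝ) ^ 10 * (4 ^ k * 4 ^ (9 * k)) ≤ N := by ring_nf at hN ⊢; exact hN
  have h4k : (1 : ℝ) ≤ 4 ^ k := one_le_pow₀ (by norm_num)
  have h49k : (1 : ℝ) ≤ 4 ^ (9 * k) := one_le_pow₀ (by norm_num)
  have hMN : (M : ℝ) ≤ N / 16 := by nlinarith
  refine AddCircle.forall_pos_or_forall_neg_equivIoc (fun i ↦ a i - a 0) (L := 4 ^ k)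
    (by positivity) (by push_cast; linarith) (by nlinarith) (fun i hmi hin ↦ ?_) (fun i _ hin ↦ ?_)
  · have hiN : ((i - 0 : ℕ) : ℝ) ≤ N / 16 := by simpa using (Nat.cast_le.mpr hin).trans hMN
    simpa [dist_eq_norm'] using ha 0 i ((by positivity : 0 < 4 ^ k).trans_le hmi) (hin.trans hQ) hiN
  · have h1N : ((i + 1 - i : ℕ) : ℝ) ≤ N / 16 := by
      rw [Nat.add_sub_cancel_left, Nat.cast_one]; nlinarith
    simpa [dist_eq_norm'] using (ha i (i + 1) (by omega) ((by omega : i + 1 ≤ M).trans hQ) h1N).2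

/-- Let `k ≥ 1` and `N ≥ 4^{10(k+1)}`.  Let `a_0, …, a_Q` be points of
the circle `ℝ/Nℤ` (with its arc-length metric), with `Q ≥ 4^k + 4^{9k}/2`, such that
`(r' − r) ≤ dist (a_r) (a_{r'}) ≤ 4^k·(r' − r)` whenever `r < r'` and `r' − r ≤ N/16`.
For each `i` let `t i ∈ (−N/2, N/2]` be the representative of `a_i − a_0`.  Then all the
numbers `t i` for `4^k ≤ i ≤ 4^k + 4^{9k}/2` have the same sign, i.e. the corresponding
points all lie on the same side of `a_0`. -/
theorem equally_spaced_points_on_same_side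
    (k : ℕ) (hk : 1 ≤ k) (N : ℝ) [Fact (0 < N)] (hN : (4 : ℝ) ^ (10 * (k + 1)) ≤ N)
    (Q : ℕ) (hQ : 4 ^ k + 4 ^ (9 * k) / 2 ≤ Q)
    (a : ℕ → AddCircle N)
    (ha : ∀ r r' : ℕ, r < r' → r' ≤ Q → ((r' - r : ℕ) : ℝ) ≤ N / 16 →
      ((r' - r : ℕ) : ℝ) ≤ dist (a r) (a r') ∧
      dist (a r) (a r') ≤ 4 ^ k * ((r' - r : ℕ) : ℝ)) :
    (∀ i : ℕ, 4 ^ k ≤ i → i ≤ 4 ^ k + 4 ^ (9 * k) / 2 →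
      0 < ((AddCircle.equivIoc N (-(N / 2)) (a i - a 0)) : ℝ)) ∨
    (∀ i : ℕ, 4 ^ k ≤ i → i ≤ 4 ^ k + 4 ^ (9 * k) / 2 →
      ((AddCircle.equivIoc N (-(N / 2)) (a i - a 0)) : ℝ) < 0) :=
  equally_spaced_points_on_same_side_general k N hN Q hQ a ha
end
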